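/- In the distance-2 graph of the antipodal distance-regular graph with intersection array {4, 2, 1; 1, 1, 4}, any two distinct vertices have exactly 4 common neighbors. -/
import Mathlib


open SimpleGraph

variable {V : Type*}

/-- `cArr k μ i` is the intersection number `c_i` of the array `{k,(r-1)μ,1;1,μ,k}`. -/
def cArr (k μ : ℕ) : ℕ → ℕ
  | 1 => 1
  | 2 => μ
  | 3 => k
  | _ => 0

/-- `bArr k r μ i` is the intersection number `b_i` of the array `{k,(r-1)μ,1;1,μ,k}`. -/
def bArr (k r μ : ℕ) : ℕ → ℕ
  | 0 => k
  | 1 => (r - 1) * μ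
  | 2 => 1
  | _ => 0

/-- `Γ` is a distance-regular graph of diameter 3 with intersection array
`{k, (r-1)μ, 1; 1, μ, k}`. -/
def IsDRG3 [Fintype V] (Γ : SimpleGraph V) (k r μ : ℕ) : Prop :=
  Γ.Connected ∧ (∀ x y : V, Γ.dist x y ≤ 3) ∧ (∃ x y : V, Γ.dist x y = 3) ∧
  ∀ (i : ℕ) (x y : V), i ≤ 3 → Γ.dist x y = i →
    {z : V | Γ.dist x z = i - 1 ∧ Γ.Adj z y}.ncard = cArr k μ i ∧
    {z : V | Γ.dist x z = i + 1 ∧ Γ.Adj z y}.ncard = bArr k r μ i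

/-- The relation "equal or at distance 3" is transitive (hence an equivalence). -/
def IsAntipodal [Fintype V] (Γ : SimpleGraph V) : Prop :=
  ∀ x y z : V, (x = y ∨ Γ.dist x y = 3) → (y = z ∨ Γ.dist y z = 3) →
    (x = z ∨ Γ.dist x z = 3)

/-- The distance-`i` graph of `Γ`: vertices adjacent iff at distance exactly `i`. -/
def distGraph [Fintype V] (Γ : SimpleGraph V) (i : ℕ) : SimpleGraph V :=
  SimpleGraph.fromRel (fun x y => Γ.dist x y = i)

set_option linter.unusedSectionVars false

section Aux

variable [Fintype V] {Γ : SimpleGraph V}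

private lemma ncard_eq_filter (p : V → Prop) [DecidablePred p] :
    {z : V | p z}.ncard = (Finset.univ.filter p).card := by
  rw [← Set.ncard_coe_finset]; congr 1; ext z; simp

private lemma double_count [DecidableEq V] (A B : Finset V) (R : V → V → Prop)
    [∀ u v, Decidable (R u v)] :
    ∑ u ∈ A, (B.filter fun w => R u w).card
      = ∑ w ∈ B, (A.filter fun u => R u w).card := by
  simp only [Finset.card_filter]
  exact Finset.sum_comm

private lemma dist_le3 (h : IsDRG3 Γ 4 3 1) (x y : V) : Γ.dist x y ≤ 3 := h.2.1 x y

private lemma dist0 (h : IsDRG3 Γ 4 3 1) {x y : V} : Γ.dist x y = 0 ↔ x = y :=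
  h.1.dist_eq_zero_iff

private lemma tri (h : IsDRG3 Γ 4 3 1) (x y z : V) :
    Γ.dist x z ≤ Γ.dist x y + Γ.dist y z := h.1.dist_triangle

private lemma countC (h : IsDRG3 Γ 4 3 1) {i : ℕ} {x y : V} (hi : i ≤ 3)
    (hd : Γ.dist x y = i) :
    {z : V | Γ.dist x z = i - 1 ∧ Γ.Adj z y}.ncard = cArr 4 1 i := (h.2.2.2 i x y hi hd).1

private lemma countB (h : IsDRG3 Γ 4 3 1) {i : ℕ} {x y : V} (hi : i ≤ 3)
    (hd : Γ.dist x y = i) :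
    {z : V | Γ.dist x z = i + 1 ∧ Γ.Adj z y}.ncard = bArr 4 3 1 i := (h.2.2.2 i x y hi hd).2

private lemma deg (h : IsDRG3 Γ 4 3 1) (x : V) : {z : V | Γ.Adj x z}.ncard = 4 := by
  have hb := countB h (by norm_num) (SimpleGraph.dist_self : Γ.dist x x = 0)
  simp only [bArr, Nat.zero_add] at hb
  rw [← hb]
  congr 1
  ext z
  simp only [Set.mem_setOf_eq]
  constructor
  · intro hz
    exact ⟨SimpleGraph.dist_eq_one_iff_adj.mpr hz, hz.symm⟩
  · exact fun hz => hz.2.symm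

private lemma ap1 (h : IsDRG3 Γ 4 3 1) (hA : IsAntipodal Γ) {x u w : V}
    (hu : Γ.dist x u = 1) (hw : Γ.dist u w = 3) : Γ.dist x w = 2 := by
  have t1 := tri h u x w
  rw [SimpleGraph.dist_comm (u := u) (v := x)] at t1
  have hle := dist_le3 h x w
  have hne3 : Γ.dist x w ≠ 3 := by
    intro h3
    rcases hA x w u (Or.inr h3) (Or.inr (by rwa [SimpleGraph.dist_comm])) with h' | h'
    · rw [h', SimpleGraph.dist_self] at hu; omega
    · omega
  omega

private lemma ap2 (h : IsDRG3 Γ 4 3 1) (hA : IsAntipodal Γ) {x y w : V}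
    (hxy : Γ.dist x y = 2) (hw : Γ.dist y w = 3) :
    Γ.dist x w = 1 ∨ Γ.dist x w = 2 := by
  have t1 := tri h y x w
  rw [SimpleGraph.dist_comm (u := y) (v := x)] at t1
  have hle := dist_le3 h x w
  have hne3 : Γ.dist x w ≠ 3 := by
    intro h3
    rcases hA x w y (Or.inr h3) (Or.inr (by rwa [SimpleGraph.dist_comm])) with h' | h'
    · rw [h', SimpleGraph.dist_self] at hxy; omega
    · omega
  omega

private lemma ap3 (hA : IsAntipodal Γ) {y u v : V} (h1 : Γ.dist y u = 3)
    (h2 : Γ.dist y v = 3) (huv : u ≠ v) : Γ.dist u v = 3 :=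
  (hA u y v (Or.inr (by rwa [SimpleGraph.dist_comm])) (Or.inr h2)).resolve_left huv

end Aux

section Aux2

set_option linter.unusedSectionVars false

variable [Fintype V] {Γ : SimpleGraph V}

private lemma adj_swap_iff {Γ : SimpleGraph V} (u z : V) (p : Prop) :
    (p ∧ Γ.Adj u z) ↔ (p ∧ Γ.Adj z u) :=
  and_congr_right fun _ => ⟨fun hz => hz.symm, fun hz => hz.symm⟩

private lemma k2 (h : IsDRG3 Γ 4 3 1) (x : V) : {z : V | Γ.dist x z = 2}.ncard = 8 := by
  classical
  set A := Finset.univ.filter (fun z => Γ.dist x z = 1) with hA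
  set B := Finset.univ.filter (fun z => Γ.dist x z = 2) with hB
  have hAcard : A.card = 4 := by
    rw [hA, ← ncard_eq_filter]
    have hs : {z : V | Γ.dist x z = 1} = {z : V | Γ.Adj x z} := by
      ext z; simp [SimpleGraph.dist_eq_one_iff_adj]
    rw [hs]; exact deg h x
  have hdc := double_count A B (fun u w => Γ.Adj u w)
  have hL : ∀ u ∈ A, (B.filter fun w => Γ.Adj u w).card = 2 := by
    intro u hu
    simp only [hA, Finset.mem_filter, Finset.mem_univ, true_and] at hu
    have hb := countB h (by norm_num) hu
    simp only [bArr, show (1:ℕ)+1 = 2 from rfl, show ((3:ℕ)-1)*1 = 2 from rfl] at hb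
    rw [ncard_eq_filter] at hb
    rw [← hb, hB, Finset.filter_filter]
    congr 1
    exact Finset.filter_congr fun z _ => adj_swap_iff u z _
  have hR : ∀ w ∈ B, (A.filter fun u => Γ.Adj u w).card = 1 := by
    intro w hw
    simp only [hB, Finset.mem_filter, Finset.mem_univ, true_and] at hw
    have hc := countC h (by norm_num) hw
    simp only [cArr, show (2:ℕ)-1 = 1 from rfl] at hc
    rw [ncard_eq_filter] at hc
    rw [← hc, hA, Finset.filter_filter]
  rw [Finset.sum_congr rfl hL, Finset.sum_congr rfl hR] at hdc
  simp only [Finset.sum_const, smul_eq_mul, hAcard] at hdc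
  rw [ncard_eq_filter, ← hB]
  omega

private lemma k3 (h : IsDRG3 Γ 4 3 1) (x : V) : {z : V | Γ.dist x z = 3}.ncard = 2 := by
  classical
  set B := Finset.univ.filter (fun z => Γ.dist x z = 2) with hB
  set C := Finset.univ.filter (fun z => Γ.dist x z = 3) with hC
  have hBcard : B.card = 8 := by rw [hB, ← ncard_eq_filter]; exact k2 h x
  have hdc := double_count B C (fun u w => Γ.Adj u w)
  have hL : ∀ w ∈ B, (C.filter fun v => Γ.Adj w v).card = 1 := by
    intro w hw
    simp only [hB, Finset.mem_filter, Finset.mem_univ, true_and] at hw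
    have hb := countB h (by norm_num) hw
    simp only [bArr, show (2:ℕ)+1 = 3 from rfl] at hb
    rw [ncard_eq_filter] at hb
    rw [← hb, hC, Finset.filter_filter]
    congr 1
    exact Finset.filter_congr fun z _ => adj_swap_iff w z _
  have hR : ∀ v ∈ C, (B.filter fun w => Γ.Adj w v).card = 4 := by
    intro v hv
    simp only [hC, Finset.mem_filter, Finset.mem_univ, true_and] at hv
    have hc := countC h (by norm_num) hv
    simp only [cArr, show (3:ℕ)-1 = 2 from rfl] at hc
    rw [ncard_eq_filter] at hc
    rw [← hc, hB, Finset.filter_filter]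
  rw [Finset.sum_congr rfl hL, Finset.sum_congr rfl hR] at hdc
  simp only [Finset.sum_const, smul_eq_mul, hBcard] at hdc
  rw [ncard_eq_filter, ← hC]
  omega

end Aux2

section Aux3

set_option linter.unusedSectionVars false

variable [Fintype V] {Γ : SimpleGraph V}

private lemma nbhd_split (h : IsDRG3 Γ 4 3 1) (x y : V) :
    {z : V | Γ.Adj y z}.ncard =
      {z : V | Γ.dist x z = 0 ∧ Γ.Adj y z}.ncard
      + {z : V | Γ.dist x z = 1 ∧ Γ.Adj y z}.ncard
      + {z : V | Γ.dist x z = 2 ∧ Γ.Adj y z}.ncard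
      + {z : V | Γ.dist x z = 3 ∧ Γ.Adj y z}.ncard := by
  classical
  simp only [ncard_eq_filter, Finset.card_filter, ← Finset.sum_add_distrib]
  apply Finset.sum_congr rfl
  intro z _
  have hz : Γ.dist x z ≤ 3 := dist_le3 h x z
  have h4 : Γ.dist x z = 0 ∨ Γ.dist x z = 1 ∨ Γ.dist x z = 2 ∨ Γ.dist x z = 3 := by omega
  by_cases ha : Γ.Adj y z
  · rcases h4 with h' | h' | h' | h' <;> simp [ha, h']
  · simp [ha]

private lemma gamma2_split (h : IsDRG3 Γ 4 3 1) (x y : V) :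
    {z : V | Γ.dist x z = 2}.ncard =
      {z : V | Γ.dist x z = 2 ∧ Γ.dist y z = 0}.ncard
      + {z : V | Γ.dist x z = 2 ∧ Γ.dist y z = 1}.ncard
      + {z : V | Γ.dist x z = 2 ∧ Γ.dist y z = 2}.ncard
      + {z : V | Γ.dist x z = 2 ∧ Γ.dist y z = 3}.ncard := by
  classical
  simp only [ncard_eq_filter, Finset.card_filter, ← Finset.sum_add_distrib]
  apply Finset.sum_congr rfl
  intro z _
  have hz : Γ.dist y z ≤ 3 := dist_le3 h y z
  have h4 : Γ.dist y z = 0 ∨ Γ.dist y z = 1 ∨ Γ.dist y z = 2 ∨ Γ.dist y z = 3 := by omega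
  by_cases hx : Γ.dist x z = 2
  · rcases h4 with h' | h' | h' | h' <;> simp [hx, h']
  · simp [hx]

private lemma set_adj_swap {Γ : SimpleGraph V} (y : V) (p : V → Prop) :
    {z : V | p z ∧ Γ.Adj y z} = {z : V | p z ∧ Γ.Adj z y} := by
  ext z
  exact adj_swap_iff y z (p z)

private lemma a2 (h : IsDRG3 Γ 4 3 1) {x y : V} (hd : Γ.dist x y = 2) :
    {z : V | Γ.dist x z = 2 ∧ Γ.Adj y z}.ncard = 2 := by
  have hs := nbhd_split h x y
  rw [deg h y] at hs
  have h0 : {z : V | Γ.dist x z = 0 ∧ Γ.Adj y z}.ncard = 0 := by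
    have he : {z : V | Γ.dist x z = 0 ∧ Γ.Adj y z} = ∅ := by
      ext z
      simp only [Set.mem_setOf_eq, Set.mem_empty_iff_false, iff_false, not_and]
      intro h1 h2
      have hz : x = z := (dist0 h).mp h1
      subst hz
      have : Γ.dist y x = 1 := SimpleGraph.dist_eq_one_iff_adj.mpr h2
      rw [SimpleGraph.dist_comm] at this
      omega
    rw [he, Set.ncard_empty]
  have h1 : {z : V | Γ.dist x z = 1 ∧ Γ.Adj y z}.ncard = 1 := by
    have hc := countC h (by norm_num) hd
    simp only [cArr, show (2:ℕ)-1 = 1 from rfl] at hc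
    rw [set_adj_swap]
    exact hc
  have h3 : {z : V | Γ.dist x z = 3 ∧ Γ.Adj y z}.ncard = 1 := by
    have hb := countB h (by norm_num) hd
    simp only [bArr, show (2:ℕ)+1 = 3 from rfl] at hb
    rw [set_adj_swap]
    exact hb
  omega

private lemma a3full (h : IsDRG3 Γ 4 3 1) {x y : V} (hd : Γ.dist x y = 3) {z : V}
    (ha : Γ.Adj y z) : Γ.dist x z = 2 := by
  have hs := nbhd_split h x y
  rw [deg h y] at hs
  have h2 : {z : V | Γ.dist x z = 2 ∧ Γ.Adj y z}.ncard = 4 := by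
    have hc := countC h (by norm_num) hd
    simp only [cArr, show (3:ℕ)-1 = 2 from rfl] at hc
    rw [set_adj_swap]
    exact hc
  rw [h2] at hs
  have hz : Γ.dist x z ≤ 3 := dist_le3 h x z
  by_contra hne
  have h4 : Γ.dist x z = 0 ∨ Γ.dist x z = 1 ∨ Γ.dist x z = 3 := by omega
  rcases h4 with h' | h' | h'
  · have h0 : {z : V | Γ.dist x z = 0 ∧ Γ.Adj y z}.ncard = 0 := by omega
    have hem := (Set.ncard_eq_zero (Set.toFinite _)).mp h0
    exact Set.eq_empty_iff_forall_notMem.mp hem z ⟨h', ha⟩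
  · have h0 : {z : V | Γ.dist x z = 1 ∧ Γ.Adj y z}.ncard = 0 := by omega
    have hem := (Set.ncard_eq_zero (Set.toFinite _)).mp h0
    exact Set.eq_empty_iff_forall_notMem.mp hem z ⟨h', ha⟩
  · have h0 : {z : V | Γ.dist x z = 3 ∧ Γ.Adj y z}.ncard = 0 := by omega
    have hem := (Set.ncard_eq_zero (Set.toFinite _)).mp h0
    exact Set.eq_empty_iff_forall_notMem.mp hem z ⟨h', ha⟩

private lemma fib1 (h : IsDRG3 Γ 4 3 1) (hA : IsAntipodal Γ) {x y : V}
    (hd : Γ.dist x y = 2) :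
    {w : V | Γ.dist y w = 3 ∧ Γ.dist x w = 1}.ncard = 1 := by
  classical
  set S := Finset.univ.filter (fun z => Γ.dist x z = 2) with hS
  set A := Finset.univ.filter (fun z => Γ.dist x z = 1) with hA'
  have hScard : S.card = 8 := by rw [hS, ← ncard_eq_filter]; exact k2 h x
  have hAcard : A.card = 4 := by
    rw [hA', ← ncard_eq_filter]
    have hs : {z : V | Γ.dist x z = 1} = {z : V | Γ.Adj x z} := by
      ext z; simp [SimpleGraph.dist_eq_one_iff_adj]
    rw [hs]; exact deg h x
  have hdc := double_count S A (fun s a => Γ.dist s a = 3)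
  have hR : ∀ u ∈ A, (S.filter fun s => Γ.dist s u = 3).card = 2 := by
    intro u hu
    simp only [hA', Finset.mem_filter, Finset.mem_univ, true_and] at hu
    have hk := k3 h u
    rw [ncard_eq_filter] at hk
    rw [← hk]
    congr 1
    rw [hS, Finset.filter_filter]
    apply Finset.filter_congr
    intro z _
    constructor
    · intro hz
      rw [SimpleGraph.dist_comm]
      exact hz.2
    · intro hz
      have h3 : Γ.dist z u = 3 := by rwa [SimpleGraph.dist_comm]
      exact ⟨ap1 h hA hu hz, h3⟩
  have hsum : ∑ s ∈ S, (A.filter fun a => Γ.dist s a = 3).card = 8 := by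
    rw [hdc, Finset.sum_congr rfl hR, Finset.sum_const, hAcard]
    norm_num
  have hle1 : ∀ s ∈ S, (A.filter fun a => Γ.dist s a = 3).card ≤ 1 := by
    intro s _
    rw [Finset.card_le_one]
    intro a ha b hb
    simp only [hA', Finset.mem_filter, Finset.mem_univ, true_and] at ha hb
    by_contra hab
    have h3 := ap3 hA ha.2 hb.2 hab
    have ht := tri h a x b
    rw [SimpleGraph.dist_comm (u := a) (v := x)] at ht
    omega
  have hy : y ∈ S := by simp [hS, hd]
  have h1 : (A.filter fun a => Γ.dist y a = 3).card = 1 := by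
    by_contra hne
    have h0 : (A.filter fun a => Γ.dist y a = 3).card = 0 := by
      have := hle1 y hy; omega
    have hlt := Finset.sum_lt_sum hle1 ⟨y, hy, by omega⟩
    rw [Finset.sum_const, hScard, smul_eq_mul] at hlt
    omega
  rw [ncard_eq_filter]
  have heq : (Finset.univ.filter fun w => Γ.dist y w = 3 ∧ Γ.dist x w = 1)
      = A.filter fun a => Γ.dist y a = 3 := by
    rw [hA', Finset.filter_filter]
    apply Finset.filter_congr
    intro z _
    exact and_comm
  rw [heq]
  exact h1

private lemma fib2 (h : IsDRG3 Γ 4 3 1) (hA : IsAntipodal Γ) {x y : V}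
    (hd : Γ.dist x y = 2) :
    {w : V | Γ.dist y w = 3 ∧ Γ.dist x w = 2}.ncard = 1 := by
  have hk := k3 h y
  have hu : {w : V | Γ.dist y w = 3} =
      {w : V | Γ.dist y w = 3 ∧ Γ.dist x w = 1} ∪
      {w : V | Γ.dist y w = 3 ∧ Γ.dist x w = 2} := by
    ext w
    simp only [Set.mem_setOf_eq, Set.mem_union]
    constructor
    · intro hw
      rcases ap2 h hA hd hw with h' | h'
      · exact Or.inl ⟨hw, h'⟩
      · exact Or.inr ⟨hw, h'⟩
    · rintro (⟨hw, _⟩ | ⟨hw, _⟩) <;> exact hw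
  have hdis : Disjoint {w : V | Γ.dist y w = 3 ∧ Γ.dist x w = 1}
      {w : V | Γ.dist y w = 3 ∧ Γ.dist x w = 2} := by
    rw [Set.disjoint_left]
    rintro w ⟨_, h1⟩ ⟨_, h2⟩
    omega
  rw [hu, Set.ncard_union_eq hdis (Set.toFinite _) (Set.toFinite _), fib1 h hA hd] at hk
  omega

end Aux3

section Main

set_option linter.unusedSectionVars false

variable [Fintype V] {Γ : SimpleGraph V}

private lemma commonN_eq (Γ : SimpleGraph V) (x y : V) (hconn : Γ.Connected) :
    (distGraph Γ 2).commonNeighbors x y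
      = {z : V | Γ.dist x z = 2 ∧ Γ.dist y z = 2} := by
  ext z
  rw [SimpleGraph.mem_commonNeighbors]
  simp only [distGraph, SimpleGraph.fromRel_adj, Set.mem_setOf_eq]
  constructor
  · rintro ⟨⟨_, hx⟩, _, hy⟩
    constructor
    · rcases hx with h' | h'
      · exact h'
      · rwa [SimpleGraph.dist_comm]
    · rcases hy with h' | h'
      · exact h'
      · rwa [SimpleGraph.dist_comm]
  · rintro ⟨h1, h2⟩
    refine ⟨⟨?_, Or.inl h1⟩, ?_, Or.inl h2⟩
    · intro he
      rw [he, SimpleGraph.dist_self] at h1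
      omega
    · intro he
      rw [he, SimpleGraph.dist_self] at h2
      omega

end Main


/-- in the distance-2 graph of the antipodal distance-regular graph with
intersection array {4,2,1;1,1,4} (k = 4, r = 3, μ = 1), any two distinct vertices have
exactly 4 common neighbors. -/
theorem stmt15 [Fintype V] (Γ : SimpleGraph V)
    (hDRG : IsDRG3 Γ 4 3 1) (hAnt : IsAntipodal Γ) :
    ∀ x y : V, x ≠ y → ((distGraph Γ 2).commonNeighbors x y).ncard = 4 := by
  intro x y hxy
  rw [commonN_eq Γ x y hDRG.1]
  have hsplit := gamma2_split hDRG x y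
  rw [k2 hDRG x] at hsplit
  have hle := dist_le3 hDRG x y
  have hne0 : Γ.dist x y ≠ 0 := fun h0 => hxy ((dist0 hDRG).mp h0)
  have hcases : Γ.dist x y = 1 ∨ Γ.dist x y = 2 ∨ Γ.dist x y = 3 := by omega
  rcases hcases with hd | hd | hd
  · -- distance 1
    have h0 : {z : V | Γ.dist x z = 2 ∧ Γ.dist y z = 0}.ncard = 0 := by
      rw [Set.ncard_eq_zero (Set.toFinite _)]
      ext z
      simp only [Set.mem_setOf_eq, Set.mem_empty_iff_false, iff_false, not_and]
      intro h2 h0'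
      have : y = z := (dist0 hDRG).mp h0'
      rw [← this] at h2
      omega
    have h1 : {z : V | Γ.dist x z = 2 ∧ Γ.dist y z = 1}.ncard = 2 := by
      have hb := countB hDRG (by norm_num) hd
      simp only [bArr, show (1:ℕ)+1 = 2 from rfl, show ((3:ℕ)-1)*1 = 2 from rfl] at hb
      have hset : {z : V | Γ.dist x z = 2 ∧ Γ.dist y z = 1}
          = {z : V | Γ.dist x z = 2 ∧ Γ.Adj z y} := by
        ext z
        simp only [Set.mem_setOf_eq]
        constructor
        · rintro ⟨hz1, hz2⟩
          exact ⟨hz1, (SimpleGraph.dist_eq_one_iff_adj.mp hz2).symm⟩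
        · rintro ⟨hz1, hz2⟩
          exact ⟨hz1, SimpleGraph.dist_eq_one_iff_adj.mpr hz2.symm⟩
      rw [hset]
      exact hb
    have h3 : {z : V | Γ.dist x z = 2 ∧ Γ.dist y z = 3}.ncard = 2 := by
      have hk := k3 hDRG y
      have hset : {z : V | Γ.dist x z = 2 ∧ Γ.dist y z = 3}
          = {z : V | Γ.dist y z = 3} := by
        ext z
        simp only [Set.mem_setOf_eq]
        constructor
        · exact fun hz => hz.2
        · exact fun hz => ⟨ap1 hDRG hAnt hd hz, hz⟩
      rw [hset]
      exact hk
    omega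
  · -- distance 2
    have h0 : {z : V | Γ.dist x z = 2 ∧ Γ.dist y z = 0}.ncard = 1 := by
      have he : {z : V | Γ.dist x z = 2 ∧ Γ.dist y z = 0} = {y} := by
        ext z
        simp only [Set.mem_setOf_eq, Set.mem_singleton_iff]
        constructor
        · rintro ⟨_, h0'⟩
          exact ((dist0 hDRG).mp h0').symm
        · rintro rfl
          exact ⟨hd, SimpleGraph.dist_self⟩
      rw [he, Set.ncard_singleton]
    have h1 : {z : V | Γ.dist x z = 2 ∧ Γ.dist y z = 1}.ncard = 2 := by
      have ha2 := a2 hDRG hd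
      have hset : {z : V | Γ.dist x z = 2 ∧ Γ.dist y z = 1}
          = {z : V | Γ.dist x z = 2 ∧ Γ.Adj y z} := by
        ext z
        simp only [Set.mem_setOf_eq]
        constructor
        · exact fun hz => ⟨hz.1, SimpleGraph.dist_eq_one_iff_adj.mp hz.2⟩
        · exact fun hz => ⟨hz.1, SimpleGraph.dist_eq_one_iff_adj.mpr hz.2⟩
      rw [hset]
      exact ha2
    have h3 : {z : V | Γ.dist x z = 2 ∧ Γ.dist y z = 3}.ncard = 1 := by
      have hf := fib2 hDRG hAnt hd
      have hset : {z : V | Γ.dist x z = 2 ∧ Γ.dist y z = 3}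
          = {w : V | Γ.dist y w = 3 ∧ Γ.dist x w = 2} := by
        ext z
        simp only [Set.mem_setOf_eq]
        exact and_comm
      rw [hset]
      exact hf
    omega
  · -- distance 3
    have h0 : {z : V | Γ.dist x z = 2 ∧ Γ.dist y z = 0}.ncard = 0 := by
      rw [Set.ncard_eq_zero (Set.toFinite _)]
      ext z
      simp only [Set.mem_setOf_eq, Set.mem_empty_iff_false, iff_false, not_and]
      intro h2 h0'
      have : y = z := (dist0 hDRG).mp h0'
      rw [← this] at h2
      omega
    have h1 : {z : V | Γ.dist x z = 2 ∧ Γ.dist y z = 1}.ncard = 4 := by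
      have hc := countC hDRG (by norm_num) hd
      simp only [cArr, show (3:ℕ)-1 = 2 from rfl] at hc
      have hset : {z : V | Γ.dist x z = 2 ∧ Γ.dist y z = 1}
          = {z : V | Γ.dist x z = 2 ∧ Γ.Adj z y} := by
        ext z
        simp only [Set.mem_setOf_eq]
        constructor
        · rintro ⟨hz1, hz2⟩
          exact ⟨hz1, (SimpleGraph.dist_eq_one_iff_adj.mp hz2).symm⟩
        · rintro ⟨hz1, hz2⟩
          exact ⟨hz1, SimpleGraph.dist_eq_one_iff_adj.mpr hz2.symm⟩
      rw [hset]
      exact hc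
    have h3 : {z : V | Γ.dist x z = 2 ∧ Γ.dist y z = 3}.ncard = 0 := by
      rw [Set.ncard_eq_zero (Set.toFinite _)]
      ext z
      simp only [Set.mem_setOf_eq, Set.mem_empty_iff_false, iff_false, not_and]
      intro h2 h3'
      rcases hAnt x y z (Or.inr hd) (Or.inr h3') with h' | h'
      · rw [← h', SimpleGraph.dist_self] at h2
        omega
      · omega
    omega
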